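/- Let (ℝⁿ, ‖·‖) be a (possibly asymmetric) strictly convex normed space that is not an inner product space, and suppose it satisfies the Φ-contraction property for some function Φ : (0,∞) → (0,∞): for every convex f and all gradient curves ξ, ζ of f, ‖ζ(t) − ξ(t)‖ ≤ Φ(t)·‖ζ(0) − ξ(0)‖ for all t ∈ (0,T). Then in fact ‖ζ(t) − ξ(t)‖ ≤ (inf_{s>0} Φ(s))·‖ζ(0) − ξ(0)‖ holds for all t ∈ (0,T), every convex f, and all gradient curves ξ, ζ of f. -/

import Mathlib

/-! Gradient curves are invariant under rescaling time and the function together: the dual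
norm is positively homogeneous, so the Legendre transform is too, and `u ↦ ξ (c * u)` is a
gradient curve of `c • f` whenever `ξ` is one of `f`. Applying the `Φ`-bound to `(t / s) • f`
at time `s` therefore bounds the distance of the original curves at time `t` by `Φ s`, for
every `s > 0`. -/

open RealInnerProductSpace

/-- A possibly asymmetric norm on `ℝⁿ`. -/
def IsAsymNorm {n : ℕ} (N : EuclideanSpace ℝ (Fin n) → ℝ) : Prop :=
  (∀ x, 0 ≤ N x) ∧ (∀ x, N x = 0 ↔ x = 0) ∧
  (∀ x : EuclideanSpace ℝ (Fin n), ∀ c : ℝ, 0 < c → N (c • x) = c * N x) ∧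
  (∀ x y, N (x + y) ≤ N x + N y)

/-- Strict convexity of a (possibly asymmetric) norm. -/
def IsStrictlyConvexN {n : ℕ} (N : EuclideanSpace ℝ (Fin n) → ℝ) : Prop :=
  ∀ x y, N (x + y) = N x + N y → ∃ a : ℝ, 0 ≤ a ∧ (x = a • y ∨ y = a • x)

/-- `N` is induced from an inner product. -/
def IsInnerProductNorm {n : ℕ} (N : EuclideanSpace ℝ (Fin n) → ℝ) : Prop :=
  ∃ ip : EuclideanSpace ℝ (Fin n) → EuclideanSpace ℝ (Fin n) → ℝ,
    (∀ x y, ip x y = ip y x) ∧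
    (∀ x y z, ip (x + y) z = ip x z + ip y z) ∧
    (∀ (c : ℝ) x y, ip (c • x) y = c * ip x y) ∧
    (∀ x, 0 ≤ ip x x) ∧
    (∀ x, ip x x = 0 → x = 0) ∧
    (∀ x, N x = Real.sqrt (ip x x))

/-- The dual norm `‖α‖_* = sup {α(x) : ‖x‖ ≤ 1}`, with covectors identified with
vectors via the Euclidean inner product. -/
noncomputable def dualN {n : ℕ} (N : EuclideanSpace ℝ (Fin n) → ℝ)
    (a : EuclideanSpace ℝ (Fin n)) : ℝ :=
  sSup {r : ℝ | ∃ x, N x ≤ 1 ∧ r = ⟪a, x⟫}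

/-- The Legendre transform `𝓛(α) = ½ d[‖·‖_*²](α)` associated with the norm `N`. -/
noncomputable def legendreN {n : ℕ} (N : EuclideanSpace ℝ (Fin n) → ℝ)
    (a : EuclideanSpace ℝ (Fin n)) : EuclideanSpace ℝ (Fin n) :=
  gradient (fun b => dualN N b ^ 2 / 2) a

/-- A gradient curve for `f` on `[0,T)`: a solution of `ξ'(t) = ∇[−f](ξ(t))`,
where `∇[−f](x) = 𝓛(−df(x))`. -/
def IsGradCurve {n : ℕ} (N f : EuclideanSpace ℝ (Fin n) → ℝ) (T : ℝ)
    (ξ : ℝ → EuclideanSpace ℝ (Fin n)) : Prop :=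
  ∀ t : ℝ, 0 ≤ t → t < T → HasDerivAt ξ (legendreN N (-(gradient f (ξ t)))) t

section GradientScaling

variable {F : Type*} [NormedAddCommGroup F] [InnerProductSpace ℝ F] [CompleteSpace F]

theorem gradient_const_smul_field (f : F → ℝ) (c : ℝ) (x : F) :
    gradient (c • f) x = c • gradient f x := by
  simp only [gradient, fderiv_const_smul_field, Pi.smul_apply, map_smul]

theorem gradient_comp_smul (f : F → ℝ) (c : ℝ) (x : F) :
    gradient (fun y => f (c • y)) x = c • gradient f (c • x) := by
  simp only [gradient, fderiv_comp_smul, map_smul]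

theorem smul_gradient_smul_of_homogeneous {q : F → ℝ} {c : ℝ} {k : ℕ}
    (hq : ∀ x, q (c • x) = c ^ k * q x) (a : F) :
    c • gradient q (c • a) = c ^ k • gradient q a := by
  have hscaled : (fun y => q (c • y)) = c ^ k • q := funext hq
  rw [← gradient_comp_smul, hscaled, gradient_const_smul_field]

end GradientScaling

section Legendre

variable {n : ℕ} (N : EuclideanSpace ℝ (Fin n) → ℝ)

open Pointwise in
theorem dualN_smul {c : ℝ} (hc : 0 ≤ c) (a : EuclideanSpace ℝ (Fin n)) :
    dualN N (c • a) = c * dualN N a := by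
  have hset : {r : ℝ | ∃ x, N x ≤ 1 ∧ r = ⟪c • a, x⟫}
      = c • {r : ℝ | ∃ x, N x ≤ 1 ∧ r = ⟪a, x⟫} := by
    ext r
    simp only [Set.mem_smul_set, real_inner_smul_left, smul_eq_mul]
    constructor
    · rintro ⟨x, hx, rfl⟩; exact ⟨⟪a, x⟫, ⟨x, hx, rfl⟩, rfl⟩
    · rintro ⟨_, ⟨x, hx, rfl⟩, rfl⟩; exact ⟨x, hx, rfl⟩
  rw [dualN, hset, Real.sSup_smul_of_nonneg hc, smul_eq_mul, dualN]

theorem legendreN_smul {c : ℝ} (hc : 0 < c) (a : EuclideanSpace ℝ (Fin n)) :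
    legendreN N (c • a) = c • legendreN N a := by
  have hom : c • legendreN N (c • a) = c ^ 2 • legendreN N a :=
    smul_gradient_smul_of_homogeneous (q := fun b => dualN N b ^ 2 / 2)
      (fun b => by rw [dualN_smul N hc.le]; ring) a
  rwa [pow_two, mul_smul, smul_right_inj hc.ne'] at hom

theorem IsGradCurve.comp_mul {f : EuclideanSpace ℝ (Fin n) → ℝ} {T c : ℝ}
    {ξ : ℝ → EuclideanSpace ℝ (Fin n)} (hξ : IsGradCurve N f T ξ) (hc : 0 < c) :
    IsGradCurve N (c • f) (T / c) (fun u => ξ (c * u)) := by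
  intro u hu huT
  have hcu : c * u < T := by rwa [lt_div_iff₀ hc, mul_comm] at huT
  have hvel : legendreN N (-gradient (c • f) (ξ (c * u)))
      = c • legendreN N (-gradient f (ξ (c * u))) := by
    rw [gradient_const_smul_field, ← smul_neg, legendreN_smul N hc]
  rw [hvel]
  exact (hξ _ (by positivity) hcu).scomp u
    (((hasDerivAt_id u).const_mul c).congr_deriv (mul_one c))

end Legendre

open Pointwise in
theorem le_sInf_mul_of_forall_le_mul {S : Set ℝ} (hS : S.Nonempty) {a d : ℝ} (hd : 0 ≤ d)
    (h : ∀ y ∈ S, a ≤ y * d) : a ≤ sInf S * d := by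
  rw [mul_comm, ← smul_eq_mul, ← Real.sInf_smul_of_nonneg hd]
  refine le_csInf (hS.smul_set) ?_
  rintro _ ⟨y, hy, rfl⟩
  simpa only [smul_eq_mul, mul_comm] using h y hy

theorem Phi_contraction_improves_general (n : ℕ)
    (N : EuclideanSpace ℝ (Fin n) → ℝ)
    (hN : IsAsymNorm N)
    (Φ : ℝ → ℝ)
    (hΦ : ∀ f : EuclideanSpace ℝ (Fin n) → ℝ,
      ConvexOn ℝ Set.univ f → Differentiable ℝ f →
      ∀ T : ℝ, 0 < T → ∀ ξ ζ : ℝ → EuclideanSpace ℝ (Fin n),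
        IsGradCurve N f T ξ → IsGradCurve N f T ζ →
        ∀ t : ℝ, 0 < t → t < T → N (ζ t - ξ t) ≤ Φ t * N (ζ 0 - ξ 0)) :
    ∀ f : EuclideanSpace ℝ (Fin n) → ℝ,
      ConvexOn ℝ Set.univ f → Differentiable ℝ f →
      ∀ T : ℝ, 0 < T → ∀ ξ ζ : ℝ → EuclideanSpace ℝ (Fin n),
        IsGradCurve N f T ξ → IsGradCurve N f T ζ →
        ∀ t : ℝ, 0 < t → t < T →
          N (ζ t - ξ t) ≤ sInf {y : ℝ | ∃ s : ℝ, 0 < s ∧ y = Φ s} * N (ζ 0 - ξ 0) := by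
  intro f hconv hdiff T hT ξ ζ hξ hζ t ht htT
  refine le_sInf_mul_of_forall_le_mul ?_ (hN.1 _) ?_
  · exact ⟨Φ 1, 1, one_pos, rfl⟩
  rintro _ ⟨s, hs, rfl⟩
  set c := t / s
  have hc : 0 < c := div_pos ht hs
  have hcs : c * s = t := div_mul_cancel₀ t hs.ne'
  have hsT : s < T / c := by rw [lt_div_iff₀ hc, mul_comm, hcs]; exact htT
  simpa [hcs] using hΦ (c • f) (hconv.smul hc.le) (hdiff.const_smul c) (T / c) (div_pos hT hc)
    _ _ (hξ.comp_mul N hc) (hζ.comp_mul N hc) s hs hsT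

/-- on a strictly convex non-inner-product normed space, the
`Φ`-contraction property upgrades to the `(inf_{s>0} Φ(s))`-contraction property. -/
theorem Phi_contraction_improves (n : ℕ)
    (N : EuclideanSpace ℝ (Fin n) → ℝ)
    (hN : IsAsymNorm N) (hsc : IsStrictlyConvexN N)
    (hni : ¬ IsInnerProductNorm N)
    (Φ : ℝ → ℝ) (hΦpos : ∀ s : ℝ, 0 < s → 0 < Φ s)
    (hΦ : ∀ f : EuclideanSpace ℝ (Fin n) → ℝ,
      ConvexOn ℝ Set.univ f → Differentiable ℝ f →
      ∀ T : ℝ, 0 < T → ∀ ξ ζ : ℝ → EuclideanSpace ℝ (Fin n),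
        IsGradCurve N f T ξ → IsGradCurve N f T ζ →
        ∀ t : ℝ, 0 < t → t < T → N (ζ t - ξ t) ≤ Φ t * N (ζ 0 - ξ 0)) :
    ∀ f : EuclideanSpace ℝ (Fin n) → ℝ,
      ConvexOn ℝ Set.univ f → Differentiable ℝ f →
      ∀ T : ℝ, 0 < T → ∀ ξ ζ : ℝ → EuclideanSpace ℝ (Fin n),
        IsGradCurve N f T ξ → IsGradCurve N f T ζ →
        ∀ t : ℝ, 0 < t → t < T →
          N (ζ t - ξ t) ≤ sInf {y : ℝ | ∃ s : ℝ, 0 < s ∧ y = Φ s} * N (ζ 0 - ξ 0) :=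
  Phi_contraction_improves_general n N hN Φ hΦ
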